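/- At an eigenvalue E of H_Λ with φ_E(x,x) ≠ 0, the derivative identity holds: dΓ_x/dE (E) + (g²ρ(x) - g²ρ̂_x)/(E-Ω)² = Γ_x(E)² Σ_{y ∈ Λ} (1 + g²ρ(y)/(E-Ω)²) |Ĝ(y,x,E)|² = 1/φ_E(x,x). -/

import Mathlib

noncomputable section

variable (d : ℕ)

/-- The finite-volume photon–atom Hamiltonian as a matrix on `ℓ²(Λ;ℝ²)`:
`H_Λ(φ,ψ) = (T_Λφ + g√ρ ψ, g√ρ φ + Ωψ)`. -/
def hamMat (Λ : Finset (Fin d → ℤ)) (T : (Fin d → ℤ) → (Fin d → ℤ) → ℝ)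
    (ρ : (Fin d → ℤ) → ℝ) (g Ω : ℝ) :
    Matrix ({a // a ∈ Λ} × Fin 2) ({a // a ∈ Λ} × Fin 2) ℝ :=
  Matrix.of fun p q =>
    if p.2 = 0 then
      (if q.2 = 0 then T p.1 q.1
       else if p.1 = q.1 then g * Real.sqrt (ρ p.1) else 0)
    else
      (if q.2 = 0 then (if p.1 = q.1 then g * Real.sqrt (ρ p.1) else 0)
       else if p.1 = q.1 then Ω else 0)

/-- The orthogonal projection onto the `E`-eigenspace of `H_Λ`, as an operator. -/
def eigProj (Λ : Finset (Fin d → ℤ)) (T : (Fin d → ℤ) → (Fin d → ℤ) → ℝ)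
    (ρ : (Fin d → ℤ) → ℝ) (g Ω E : ℝ) :
    EuclideanSpace ℝ ({a // a ∈ Λ} × Fin 2) →L[ℝ]
      EuclideanSpace ℝ ({a // a ∈ Λ} × Fin 2) :=
  letI K := Module.End.eigenspace (Matrix.toEuclideanLin (hamMat d Λ T ρ g Ω)) E
  K.subtypeL.comp (Submodule.orthogonalProjection K)

/-- `e_{j,x}` basis vectors. -/
def basE (Λ : Finset (Fin d → ℤ)) (j : Fin 2) (x : {a // a ∈ Λ}) :
    EuclideanSpace ℝ ({a // a ∈ Λ} × Fin 2) :=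
  EuclideanSpace.single (x, j) 1

/-- The rank-one modification `K̂_x(E)` of the reduced operator
`K_Λ(E) = T_Λ + (g²/(E-Ω))ρ`, in which `ρ(x)` is replaced by `ρ̂`. -/
def KhatMat (Λ : Finset (Fin d → ℤ)) (T : (Fin d → ℤ) → (Fin d → ℤ) → ℝ)
    (ρ : (Fin d → ℤ) → ℝ) (g Ω : ℝ) (x : {a // a ∈ Λ}) (ρhat E : ℝ) :
    Matrix {a // a ∈ Λ} {a // a ∈ Λ} ℝ :=
  Matrix.of fun a b =>
    T a b + if a = b then g ^ 2 / (E - Ω) * (if a = x then ρhat else ρ a) else 0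

/-- The modified Green's function `Ĝ(y,x,E) = ⟨δ_y, (K̂_x(E) - E)^{-1} δ_x⟩`. -/
def Ghat (Λ : Finset (Fin d → ℤ)) (T : (Fin d → ℤ) → (Fin d → ℤ) → ℝ)
    (ρ : (Fin d → ℤ) → ℝ) (g Ω : ℝ) (x : {a // a ∈ Λ}) (ρhat E : ℝ)
    (y x' : {a // a ∈ Λ}) : ℝ :=
  (KhatMat d Λ T ρ g Ω x ρhat E - E • (1 : Matrix {a // a ∈ Λ} {a // a ∈ Λ} ℝ))⁻¹ y x'



/-!
Write `M(z) = K̂_x(z) - z`, so that `Ĝ(·,·,z) = M(z)⁻¹`. Since `M'(z) = -(1 + g²ρ̂/(z-Ω)²)` is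
diagonal and `M` is symmetric, `∂_z Ĝ(x,x,z) = Σ_y (1 + g²ρ̂(y)/(z-Ω)²) Ĝ(y,x,z)²`, and
`Γ' = ∂_z Ĝ(x,x) / Ĝ(x,x)²`; the `y = x` term carries `ρ̂_x` instead of `ρ(x)`, which is the
correction on the left.

An eigenvector `(φ, χ)` of `H_Λ` at `E` has `χ = g√ρ φ/(E-Ω)` and `K(E)φ = Eφ`. As `K̂_x - K` is
supported at `x`, `M(E)φ` is a multiple of `δ_x`, so `φ = c φ(x) Ĝ(·,x,E)` with
`c = g²(ρ̂_x - ρ(x))/(E-Ω)`. Hence the eigenspace is the line through the lift of `Ĝ(·,x,E)`,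
`c Ĝ(x,x,E) = 1`, and `φ_E(x,x) = Ĝ(x,x,E)² / ‖lift‖²` with
`‖lift‖² = Σ_y (1 + g²ρ(y)/(E-Ω)²) Ĝ(y,x,E)²`.
-/

open Matrix

theorem Matrix.hasDerivAt_inv_apply {N : Type*} [Fintype N] [DecidableEq N]
    {F : ℝ → Matrix N N ℝ} {F' : Matrix N N ℝ} {z : ℝ}
    (hF : ∀ i j, HasDerivAt (fun t => F t i j) (F' i j) z) (hunit : IsUnit (F z)) (i j : N) :
    HasDerivAt (fun t => (F t)⁻¹ i j) (-((F z)⁻¹ * F' * (F z)⁻¹) i j) z := by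
  let _ := Matrix.linftyOpNormedRing (n := N) (α := ℝ)
  let _ := Matrix.linftyOpNormedAlgebra (n := N) (R := ℝ) (α := ℝ)
  have hF' : HasDerivAt F F' z := hasDerivAt_pi.2 fun i => hasDerivAt_pi.2 (hF i)
  obtain ⟨u, hu⟩ := hunit
  have hinv := (hu ▸ hasFDerivAt_ringInverse (𝕜 := ℝ) u).comp_hasDerivAt z hF'
  simp only [nonsing_inv_eq_ringInverse, ← hu, Ring.inverse_unit] at hinv ⊢
  exact hasDerivAt_pi.1 (hasDerivAt_pi.1 hinv i) j

theorem real_inner_starProjection_span_singleton {F : Type*} [NormedAddCommGroup F]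
    [InnerProductSpace ℝ F] (w e : F) :
    inner ℝ e ((ℝ ∙ w).starProjection e) = inner ℝ w e ^ 2 / ‖w‖ ^ 2 := by
  rw [Submodule.starProjection_singleton, real_inner_smul_right, real_inner_comm]
  simp only [RCLike.ofReal_real_eq_id, id]
  ring

theorem sum_one_add_update_div_mul {N : Type*} [Fintype N] [DecidableEq N] (D : N → ℝ) (x : N)
    (r c s : ℝ) (u : N → ℝ) :
    ∑ w, (1 + c * Function.update D x r w / s) * u w
      = ∑ w, (1 + c * D w / s) * u w + c * (r - D x) / s * u x := by
  have hterm : ∀ w, (1 + c * Function.update D x r w / s) * u w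
      = (1 + c * D w / s) * u w + if w = x then c * (r - D x) / s * u x else 0 := by
    intro w
    by_cases hw : w = x
    · subst hw; simp; ring
    · simp [hw]
  simp only [hterm, Finset.sum_add_distrib, Finset.sum_ite_eq', Finset.mem_univ, if_true]

section ShiftedReducedOp

variable {N : Type*} [DecidableEq N]

/-- With `c = g²` and `D = ρ` this is `K_Λ(z) - z`, the Schur complement of `H_Λ - z` on the
photon component. -/
def shiftedReducedOp (A : Matrix N N ℝ) (D : N → ℝ) (c Ω z : ℝ) : Matrix N N ℝ :=
  A + (c / (z - Ω)) • diagonal D - z • 1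

variable {A : Matrix N N ℝ} {D : N → ℝ} {c Ω z : ℝ}

theorem shiftedReducedOp_mulVec_apply [Fintype N] (u : N → ℝ) (a : N) :
    (shiftedReducedOp A D c Ω z *ᵥ u) a = (A *ᵥ u) a + c / (z - Ω) * D a * u a - z * u a := by
  simp [shiftedReducedOp, sub_mulVec, add_mulVec, smul_mulVec, mulVec_diagonal, mul_assoc]

theorem shiftedReducedOp_update_mulVec [Fintype N] (x : N) (r : ℝ) (u : N → ℝ) :
    shiftedReducedOp A (Function.update D x r) c Ω z *ᵥ u
      = shiftedReducedOp A D c Ω z *ᵥ u + Pi.single x (c / (z - Ω) * (r - D x) * u x) := by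
  ext a
  simp only [shiftedReducedOp_mulVec_apply, Pi.add_apply, Function.update_apply, Pi.single_apply]
  split_ifs with h
  · subst h; ring
  · ring

theorem eq_smul_inv_apply_of_shiftedReducedOp_mulVec_eq_zero [Fintype N] {x : N} {r : ℝ}
    {u : N → ℝ} (hunit : IsUnit (shiftedReducedOp A (Function.update D x r) c Ω z))
    (hu : shiftedReducedOp A D c Ω z *ᵥ u = 0) :
    u = (c / (z - Ω) * (r - D x) * u x) •
      fun y => (shiftedReducedOp A (Function.update D x r) c Ω z)⁻¹ y x := by
  have hupd := shiftedReducedOp_update_mulVec (A := A) (D := D) (c := c) (Ω := Ω) (z := z) x r u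
  rw [hu, zero_add] at hupd
  have hdet := (isUnit_iff_isUnit_det _).mp hunit
  calc u = (shiftedReducedOp A (Function.update D x r) c Ω z)⁻¹ *ᵥ
        (shiftedReducedOp A (Function.update D x r) c Ω z *ᵥ u) := by
        rw [mulVec_mulVec, nonsing_inv_mul _ hdet, one_mulVec]
    _ = _ := by
        ext y
        simp only [hupd, mulVec_single, Pi.smul_apply, col_apply, smul_eq_mul,
          MulOpposite.smul_eq_mul_unop, MulOpposite.unop_op]
        ring

theorem hasDerivAt_shiftedReducedOp_apply (hz : z ≠ Ω) (i j : N) :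
    HasDerivAt (fun t => shiftedReducedOp A D c Ω t i j)
      (-diagonal (fun w => 1 + c * D w / (z - Ω) ^ 2) i j) z := by
  have hinv : HasDerivAt (fun t => c / (t - Ω)) (-(c / (z - Ω) ^ 2)) z := by
    simpa [div_eq_mul_inv] using
      (((hasDerivAt_id z).sub_const Ω).inv (sub_ne_zero.mpr hz)).const_mul c
  have hentry : (fun t => shiftedReducedOp A D c Ω t i j)
      = fun t => A i j + c / (t - Ω) * diagonal D i j - t * (1 : Matrix N N ℝ) i j := by
    funext t; simp [shiftedReducedOp]
  rw [hentry]
  refine (((hinv.mul_const (diagonal D i j)).const_add (A i j)).sub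
    ((hasDerivAt_id z).mul_const ((1 : Matrix N N ℝ) i j))).congr_deriv ?_
  by_cases hij : i = j
  · subst hij; simp; ring
  · simp [hij]

theorem hasDerivAt_shiftedReducedOp_inv_apply_self [Fintype N] (hA : A.IsSymm) (hz : z ≠ Ω)
    (hunit : IsUnit (shiftedReducedOp A D c Ω z)) (x : N) :
    HasDerivAt (fun t => (shiftedReducedOp A D c Ω t)⁻¹ x x)
      (∑ w, (1 + c * D w / (z - Ω) ^ 2) * (shiftedReducedOp A D c Ω z)⁻¹ w x ^ 2) z := by
  have hsymm : (shiftedReducedOp A D c Ω z)⁻¹.IsSymm := by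
    refine IsSymm.inv ?_
    simp [shiftedReducedOp, IsSymm, transpose_sub, transpose_add, hA.eq]
  refine (Matrix.hasDerivAt_inv_apply (F' := -diagonal fun w => 1 + c * D w / (z - Ω) ^ 2)
    (hasDerivAt_shiftedReducedOp_apply hz) hunit x x).congr_deriv ?_
  rw [Matrix.mul_neg, Matrix.neg_mul, Matrix.neg_apply, neg_neg, mul_apply]
  refine Finset.sum_congr rfl fun w _ => ?_
  rw [mul_diagonal, hsymm.apply x w]
  ring

end ShiftedReducedOp

section Lattice

variable {d} {Λ : Finset (Fin d → ℤ)} {T : (Fin d → ℤ) → (Fin d → ℤ) → ℝ}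
  {ρ : (Fin d → ℤ) → ℝ} {g Ω E : ℝ} {x : {a // a ∈ Λ}} {ρhat : ℝ}

def hoppingMatrix (Λ : Finset (Fin d → ℤ)) (T : (Fin d → ℤ) → (Fin d → ℤ) → ℝ) :
    Matrix {a // a ∈ Λ} {a // a ∈ Λ} ℝ :=
  Matrix.of fun a b => T a b

theorem KhatMat_sub_smul_one (x : {a // a ∈ Λ}) (ρhat z : ℝ) :
    KhatMat d Λ T ρ g Ω x ρhat z - z • 1
      = shiftedReducedOp (hoppingMatrix Λ T) (Function.update (fun a => ρ a) x ρhat)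
          (g ^ 2) Ω z := by
  ext a b
  by_cases hab : a = b
  · subst hab
    by_cases hax : a = x
    · subst hax; simp [KhatMat, shiftedReducedOp, hoppingMatrix]
    · simp [KhatMat, shiftedReducedOp, hoppingMatrix, hax]
  · simp [KhatMat, shiftedReducedOp, hoppingMatrix, hab]

theorem Ghat_eq_shiftedReducedOp_inv (x : {a // a ∈ Λ}) (ρhat z : ℝ) (y x' : {a // a ∈ Λ}) :
    Ghat d Λ T ρ g Ω x ρhat z y x'
      = (shiftedReducedOp (hoppingMatrix Λ T) (Function.update (fun a => ρ a) x ρhat)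
          (g ^ 2) Ω z)⁻¹ y x' := by
  rw [Ghat, KhatMat_sub_smul_one]

theorem hasDerivAt_neg_inv_Ghat_self (hT : ∀ a b, T a b = T b a) (hE : E ≠ Ω)
    (hinv : IsUnit (KhatMat d Λ T ρ g Ω x ρhat E - E • 1))
    (hx : Ghat d Λ T ρ g Ω x ρhat E x x ≠ 0) :
    HasDerivAt (fun z => -(Ghat d Λ T ρ g Ω x ρhat z x x)⁻¹)
      ((∑ w : {a // a ∈ Λ},
          (1 + g ^ 2 * Function.update (fun a : {a // a ∈ Λ} => ρ a) x ρhat w / (E - Ω) ^ 2)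
            * Ghat d Λ T ρ g Ω x ρhat E w x ^ 2) / Ghat d Λ T ρ g Ω x ρhat E x x ^ 2) E := by
  have hsymm : (hoppingMatrix Λ T).IsSymm := IsSymm.ext fun a b => hT b a
  rw [KhatMat_sub_smul_one] at hinv
  simp only [Ghat_eq_shiftedReducedOp_inv] at hx ⊢
  exact ((hasDerivAt_shiftedReducedOp_inv_apply_self hsymm hE hinv x).inv hx).neg.congr_deriv
    (by ring)

theorem hamMat_mulVec_apply_zero (ψ : {a // a ∈ Λ} × Fin 2 → ℝ) (a : {a // a ∈ Λ}) :
    (hamMat d Λ T ρ g Ω *ᵥ ψ) (a, 0)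
      = (hoppingMatrix Λ T *ᵥ fun b => ψ (b, 0)) a + g * √(ρ a) * ψ (a, 1) := by
  simp [hamMat, hoppingMatrix, mulVec, dotProduct, Fintype.sum_prod_type, Fin.sum_univ_two,
    ite_mul, Finset.sum_ite_eq, Finset.sum_add_distrib]

theorem hamMat_mulVec_apply_one (ψ : {a // a ∈ Λ} × Fin 2 → ℝ) (a : {a // a ∈ Λ}) :
    (hamMat d Λ T ρ g Ω *ᵥ ψ) (a, 1) = g * √(ρ a) * ψ (a, 0) + Ω * ψ (a, 1) := by
  simp [hamMat, mulVec, dotProduct, Fintype.sum_prod_type, Fin.sum_univ_two,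
    ite_mul, Finset.sum_ite_eq, Finset.sum_add_distrib]

theorem atomic_eq_of_hamMat_mulVec_eq_smul {ψ : {a // a ∈ Λ} × Fin 2 → ℝ} (hE : E ≠ Ω)
    (hψ : hamMat d Λ T ρ g Ω *ᵥ ψ = E • ψ) (a : {a // a ∈ Λ}) :
    ψ (a, 1) = g * √(ρ a) * ψ (a, 0) / (E - Ω) := by
  have h := congrFun hψ (a, 1)
  rw [hamMat_mulVec_apply_one, Pi.smul_apply, smul_eq_mul] at h
  field_simp [sub_ne_zero.mpr hE]
  linarith

theorem shiftedReducedOp_mulVec_eq_zero_of_hamMat_mulVec_eq_smul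
    {ψ : {a // a ∈ Λ} × Fin 2 → ℝ} (hρ : ∀ a, 0 ≤ ρ a) (hE : E ≠ Ω)
    (hψ : hamMat d Λ T ρ g Ω *ᵥ ψ = E • ψ) :
    shiftedReducedOp (hoppingMatrix Λ T) (fun a => ρ a) (g ^ 2) Ω E *ᵥ (fun a => ψ (a, 0))
      = 0 := by
  ext a
  have h := congrFun hψ (a, 0)
  rw [hamMat_mulVec_apply_zero, atomic_eq_of_hamMat_mulVec_eq_smul hE hψ, Pi.smul_apply,
    smul_eq_mul] at h
  have hsqrt : √(ρ a) * √(ρ a) = ρ a := Real.mul_self_sqrt (hρ a)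
  rw [shiftedReducedOp_mulVec_apply, Pi.zero_apply]
  linear_combination h - g ^ 2 * ψ (a, 0) / (E - Ω) * hsqrt

def eigenLift (Λ : Finset (Fin d → ℤ)) (ρ : (Fin d → ℤ) → ℝ) (g Ω E : ℝ)
    (u : {a // a ∈ Λ} → ℝ) : EuclideanSpace ℝ ({a // a ∈ Λ} × Fin 2) :=
  WithLp.toLp 2 fun p => ![u p.1, g * √(ρ p.1) * u p.1 / (E - Ω)] p.2

theorem norm_eigenLift_sq (hρ : ∀ a, 0 ≤ ρ a) (hE : E ≠ Ω) (u : {a // a ∈ Λ} → ℝ) :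
    ‖eigenLift Λ ρ g Ω E u‖ ^ 2
      = ∑ a : {a // a ∈ Λ}, (1 + g ^ 2 * ρ a / (E - Ω) ^ 2) * u a ^ 2 := by
  rw [EuclideanSpace.norm_sq_eq, Fintype.sum_prod_type]
  refine Finset.sum_congr rfl fun a _ => ?_
  have hsqrt : √(ρ a) ^ 2 = ρ a := Real.sq_sqrt (hρ a)
  simp only [Fin.sum_univ_two, eigenLift, Real.norm_eq_abs, sq_abs, Matrix.cons_val_zero,
    Matrix.cons_val_one]
  field_simp [sub_ne_zero.mpr hE]
  rw [hsqrt]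

theorem eq_smul_eigenLift_of_mem_eigenspace (hρ : ∀ a, 0 ≤ ρ a) (hE : E ≠ Ω)
    (hinv : IsUnit (KhatMat d Λ T ρ g Ω x ρhat E - E • 1))
    {ψ : EuclideanSpace ℝ ({a // a ∈ Λ} × Fin 2)}
    (hψ : ψ ∈ Module.End.eigenspace (toEuclideanLin (hamMat d Λ T ρ g Ω)) E) :
    ψ = (g ^ 2 / (E - Ω) * (ρhat - ρ x) * ψ (x, 0)) •
      eigenLift Λ ρ g Ω E (fun y => Ghat d Λ T ρ g Ω x ρhat E y x) := by
  have hψ' : hamMat d Λ T ρ g Ω *ᵥ ψ.ofLp = E • ψ.ofLp :=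
    congrArg WithLp.ofLp (Module.End.mem_eigenspace_iff.mp hψ)
  have hphoton := eq_smul_inv_apply_of_shiftedReducedOp_mulVec_eq_zero
    (by rwa [← KhatMat_sub_smul_one])
    (shiftedReducedOp_mulVec_eq_zero_of_hamMat_mulVec_eq_smul hρ hE hψ')
  ext ⟨a, j⟩
  revert j
  refine Fin.forall_fin_two.2 ⟨?_, ?_⟩
  · simpa [eigenLift, Ghat_eq_shiftedReducedOp_inv] using congrFun hphoton a
  · rw [atomic_eq_of_hamMat_mulVec_eq_smul hE hψ', congrFun hphoton a]
    simp [eigenLift, Ghat_eq_shiftedReducedOp_inv]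
    ring

theorem apply_ne_zero_of_hasEigenvector_hamMat (hρ : ∀ a, 0 ≤ ρ a) (hE : E ≠ Ω)
    (hinv : IsUnit (KhatMat d Λ T ρ g Ω x ρhat E - E • 1))
    {ψ : EuclideanSpace ℝ ({a // a ∈ Λ} × Fin 2)}
    (hψ : Module.End.HasEigenvector (toEuclideanLin (hamMat d Λ T ρ g Ω)) E ψ) :
    ψ (x, 0) ≠ 0 := fun h0 =>
  hψ.2 (by rw [eq_smul_eigenLift_of_mem_eigenspace hρ hE hinv hψ.1, h0]; simp)

theorem mul_Ghat_self_eq_one (hρ : ∀ a, 0 ≤ ρ a) (hE : E ≠ Ω)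
    (hinv : IsUnit (KhatMat d Λ T ρ g Ω x ρhat E - E • 1))
    (hspec : Module.End.HasEigenvalue (toEuclideanLin (hamMat d Λ T ρ g Ω)) E) :
    g ^ 2 / (E - Ω) * (ρhat - ρ x) * Ghat d Λ T ρ g Ω x ρhat E x x = 1 := by
  obtain ⟨ψ, hψ⟩ := hspec.exists_hasEigenvector
  have hx0 := congrArg (fun φ : EuclideanSpace ℝ _ => φ (x, 0))
    (eq_smul_eigenLift_of_mem_eigenspace hρ hE hinv hψ.1)
  simp only [PiLp.smul_apply, eigenLift, smul_eq_mul, Matrix.cons_val_zero] at hx0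
  exact mul_left_cancel₀ (apply_ne_zero_of_hasEigenvector_hamMat hρ hE hinv hψ)
    (by linear_combination -hx0)

theorem eigenspace_hamMat_eq_span (hρ : ∀ a, 0 ≤ ρ a) (hE : E ≠ Ω)
    (hinv : IsUnit (KhatMat d Λ T ρ g Ω x ρhat E - E • 1))
    (hspec : Module.End.HasEigenvalue (toEuclideanLin (hamMat d Λ T ρ g Ω)) E) :
    Module.End.eigenspace (toEuclideanLin (hamMat d Λ T ρ g Ω)) E
      = ℝ ∙ eigenLift Λ ρ g Ω E (fun y => Ghat d Λ T ρ g Ω x ρhat E y x) := by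
  refine le_antisymm (fun ψ hψ => ?_) ?_
  · exact Submodule.mem_span_singleton.2
      ⟨_, (eq_smul_eigenLift_of_mem_eigenspace hρ hE hinv hψ).symm⟩
  · obtain ⟨ψ, hψ⟩ := hspec.exists_hasEigenvector
    have hs : g ^ 2 / (E - Ω) * (ρhat - ρ x) * ψ (x, 0) ≠ 0 :=
      mul_ne_zero (left_ne_zero_of_mul_eq_one (mul_Ghat_self_eq_one hρ hE hinv hspec))
        (apply_ne_zero_of_hasEigenvector_hamMat hρ hE hinv hψ)
    rw [Submodule.span_singleton_le_iff_mem, ← inv_smul_smul₀ hs (eigenLift _ _ _ _ _ _),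
      ← eq_smul_eigenLift_of_mem_eigenspace hρ hE hinv hψ.1]
    exact Submodule.smul_mem _ _ hψ.1

theorem inner_basE_eigProj (hρ : ∀ a, 0 ≤ ρ a) (hE : E ≠ Ω)
    (hinv : IsUnit (KhatMat d Λ T ρ g Ω x ρhat E - E • 1))
    (hspec : Module.End.HasEigenvalue (toEuclideanLin (hamMat d Λ T ρ g Ω)) E) :
    inner ℝ (basE d Λ 0 x) (eigProj d Λ T ρ g Ω E (basE d Λ 0 x))
      = Ghat d Λ T ρ g Ω x ρhat E x x ^ 2
        / ‖eigenLift Λ ρ g Ω E (fun y => Ghat d Λ T ρ g Ω x ρhat E y x)‖ ^ 2 := by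
  change inner ℝ _ ((Module.End.eigenspace _ E).starProjection _) = _
  simp only [eigenspace_hamMat_eq_span hρ hE hinv hspec, real_inner_starProjection_span_singleton]
  simp [basE, eigenLift, EuclideanSpace.inner_single_right]

end Lattice

theorem stmt16 (Λ : Finset (Fin d → ℤ)) (T : (Fin d → ℤ) → (Fin d → ℤ) → ℝ)
    (hT : ∀ a b, T a b = T b a)
    (ρ : (Fin d → ℤ) → ℝ) (hρ : ∀ a, 0 ≤ ρ a)
    (g Ω E : ℝ) (hE : E ≠ Ω)
    (x : {a // a ∈ Λ}) (ρhat : ℝ)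
    (hinv : IsUnit (KhatMat d Λ T ρ g Ω x ρhat E
      - E • (1 : Matrix {a // a ∈ Λ} {a // a ∈ Λ} ℝ)))
    (hspec : Module.End.HasEigenvalue
      (Matrix.toEuclideanLin (hamMat d Λ T ρ g Ω)) E) :
    let φxx : ℝ := inner (𝕜 := ℝ) (basE d Λ 0 x)
      (eigProj d Λ T ρ g Ω E (basE d Λ 0 x))
    let Γ : ℝ → ℝ := fun z => -(Ghat d Λ T ρ g Ω x ρhat z x x)⁻¹
    deriv Γ E + (g ^ 2 * ρ x - g ^ 2 * ρhat) / (E - Ω) ^ 2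
        = Γ E ^ 2 * ∑ y : {a // a ∈ Λ},
            (1 + g ^ 2 * ρ y / (E - Ω) ^ 2) * |Ghat d Λ T ρ g Ω x ρhat E y x| ^ 2
      ∧ Γ E ^ 2 * ∑ y : {a // a ∈ Λ},
            (1 + g ^ 2 * ρ y / (E - Ω) ^ 2) * |Ghat d Λ T ρ g Ω x ρhat E y x| ^ 2
          = 1 / φxx := by
  intro φxx Γ
  have hGxx : Ghat d Λ T ρ g Ω x ρhat E x x ≠ 0 :=
    right_ne_zero_of_mul_eq_one (mul_Ghat_self_eq_one hρ hE hinv hspec)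
  have hΓ : Γ E = -(Ghat d Λ T ρ g Ω x ρhat E x x)⁻¹ := rfl
  simp only [sq_abs]
  refine ⟨?_, ?_⟩
  · rw [(hasDerivAt_neg_inv_Ghat_self hT hE hinv hGxx).deriv, sum_one_add_update_div_mul, hΓ]
    field_simp
    ring
  · have hφxx : φxx = _ := inner_basE_eigProj hρ hE hinv hspec
    rw [← norm_eigenLift_sq hρ hE, hΓ, hφxx, one_div_div]
    field_simp
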